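/- arXiv:2211.07897 — 4 statements merged into one kernel-verified Lean document; each statement's English description precedes it below -/
import Mathlib

section
/- Every n-vertex graph with at least n+1 edges (an excess-1 graph) contains a cycle of length at most 2n/3 + 1. -/
/-!
Let `C` be a shortest cycle, of length `g`. Deleting one edge of `C` still leaves at least `n`
edges, so some cycle `D` avoids that edge and hence has an edge off `C`. If `D` meets `C` in at
most one vertex, then `2g - 1 ≤ n`. Otherwise `D` contains an ear `P` of `C` with an edge off `C`.
The ends of `P` split `C` into arcs `A₁, A₂`, and `P` differs from both, so there are cycles of
length at most `|A₁| + |P|` and `|A₂| + |P|`; hence `g ≤ 2|P|`. The interior of `P` adds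
`|P| - 1` new vertices, so `g + |P| - 1 ≤ n`, and together `3g ≤ 2n + 2`.
-/

open Finset

theorem Finset.card_add_card_le_card_add_card_inter {α : Type*} [Fintype α] [DecidableEq α]
    (s t : Finset α) : #s + #t ≤ Fintype.card α + #(s ∩ t) := by
  have := card_union_add_card_inter s t
  have := card_le_univ (s ∪ t)
  omega

theorem List.exists_mem_notMem_of_length_le {α : Type*} {l₁ l₂ : List α} {a : α}
    (h₂ : l₂.Nodup) (ha₁ : a ∈ l₁) (ha₂ : a ∉ l₂) (hlen : l₁.length ≤ l₂.length) :
    ∃ b ∈ l₂, b ∉ l₁ := by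
  by_contra! hsub
  have := ((List.nodup_cons.mpr ⟨ha₂, h₂⟩).subperm (List.cons_subset.mpr ⟨ha₁, hsub⟩)).length_le
  simp only [List.length_cons] at this
  omega

namespace SimpleGraph

variable {V : Type*} {G : SimpleGraph V}

theorem IsAcyclic.card_edgeFinset_lt [Fintype V] [Nonempty V] [Fintype G.edgeSet]
    (hG : G.IsAcyclic) : #G.edgeFinset < Fintype.card V := by
  classical
  obtain ⟨T, hGT, -, hT⟩ := connected_top.exists_isTree_le_of_le_of_isAcyclic le_top hG
  have := hT.card_edgeFinset
  have := card_le_card (edgeFinset_mono hGT)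
  omega

theorem exists_isCycle_notMem_edges [Fintype V] [Nonempty V] [Fintype G.edgeSet]
    (h : Fintype.card V + 1 ≤ #G.edgeFinset) (e : Sym2 V) :
    ∃ (u : V) (c : G.Walk u u), c.IsCycle ∧ e ∉ c.edges := by
  classical
  have hH : ¬ (G.deleteEdges ({e} : Finset (Sym2 V))).IsAcyclic := fun hH => by
    have h₁ := hH.card_edgeFinset_lt
    have h₂ : #G.edgeFinset ≤ #(G.deleteEdges ({e} : Finset (Sym2 V))).edgeFinset + 1 := by
      rw [edgeFinset_deleteEdges]
      exact (card_le_card_sdiff_add_card (t := {e})).trans (by simp)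
    omega
  rw [IsAcyclic] at hH
  push Not at hH
  obtain ⟨u, c, hc⟩ := hH
  refine ⟨u, c.mapLe (G.deleteEdges_le _), hc.mapLe _, fun he => ?_⟩
  rw [Walk.edges_mapLe_eq_edges] at he
  simpa using c.edges_subset_edgeSet he

theorem girth_le_length_add_length_of_ne {u v : V} {p q : G.Walk u v} (hp : p.IsPath)
    (hq : q.IsPath) (hpq : p ≠ q) : G.girth ≤ p.length + q.length := by
  obtain ⟨w, -, -, c, hc, hlen⟩ := hp.exists_isCycle_length_le_add_of_ne hq hpq
  exact (G.girth_le_length hc).trans hlen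

namespace Walk

theorem IsCycle.card_support_toFinset [DecidableEq V] {u : V} {c : G.Walk u u}
    (hc : c.IsCycle) : #c.support.toFinset = c.length := by
  rw [← cons_tail_support, List.toFinset_cons,
    insert_eq_of_mem (List.mem_toFinset.mpr (end_mem_tail_support hc.not_nil)),
    List.toFinset_card_of_nodup hc.support_nodup, List.length_tail, length_support]
  rfl

theorem IsCycle.exists_isPath_isPath_of_ne {u x y : V} {c : G.Walk u u} (hc : c.IsCycle)
    (hx : x ∈ c.support) (hy : y ∈ c.support) (hxy : x ≠ y) :
    ∃ (p : G.Walk x y) (q : G.Walk y x), p.IsPath ∧ q.IsPath ∧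
      p.length + q.length = c.length ∧ ∀ e, e ∈ c.edges ↔ e ∈ p.edges ∨ e ∈ q.edges := by
  classical
  have hy' : y ∈ (c.rotate x hx).support := (mem_support_rotate_iff ..).mpr hy
  have hc' := hc.rotate hx
  have hspec := (c.rotate x hx).take_spec hy'
  refine ⟨_, _, hc'.isPath_takeUntil hy',
    (hspec ▸ hc').isPath_of_append_right (not_nil_of_ne hxy), ?_, fun e => ?_⟩
  · rw [← length_append, hspec, length_rotate]
  · rw [← List.mem_append, ← edges_append, hspec, (rotate_edges c x hx).perm.mem_iff]

structure IsEar {x y : V} (p : G.Walk x y) (S : Set V) : Prop where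
  isPath : p.IsPath
  start_mem : x ∈ S
  end_mem : y ∈ S
  eq_or_eq_of_mem : ∀ z ∈ p.support, z ∈ S → z = x ∨ z = y

theorem IsPath.exists_isEar_mem_edges {S : Set V} {e : Sym2 V} {u v : V} {p : G.Walk u v}
    (hp : p.IsPath) (hu : u ∈ S) (hv : v ∈ S) (he : e ∈ p.edges) :
    ∃ (x y : V) (P : G.Walk x y), P.IsEar S ∧ e ∈ P.edges := by
  induction hn : p.length using Nat.strong_induction_on generalizing u v with
  | _ n ih =>
  classical
  by_cases hint : ∀ z ∈ p.support, z ∈ S → z = u ∨ z = v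
  · exact ⟨u, v, p, ⟨hp, hu, hv, hint⟩, he⟩
  push Not at hint
  obtain ⟨z, hz, hzS, hzu, hzv⟩ := hint
  rw [← p.take_spec hz, edges_append, List.mem_append] at he
  rcases he with he | he
  · exact ih _ (hn ▸ length_takeUntil_lt_length hz hzv) (hp.takeUntil hz) hu hzS he rfl
  · exact ih _ (hn ▸ length_dropUntil_lt_length hz hzu) (hp.dropUntil hz) hzS hv he rfl

end Walk

open Walk

variable [Fintype V]

theorem three_mul_girth_le_of_isEar {u x y : V} {C : G.Walk u u} (hC : C.IsCycle)
    (hCg : C.length = G.girth) {P : G.Walk x y} (hP : P.IsEar {z | z ∈ C.support})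
    {e : Sym2 V} (heP : e ∈ P.edges) (heC : e ∉ C.edges) :
    3 * G.girth ≤ 2 * Fintype.card V + 2 := by
  classical
  have hxy : x ≠ y := by
    rintro rfl
    simp [(isPath_iff_nil.mp hP.isPath).eq_nil] at heP
  obtain ⟨A, B, hA, hB, hAB, hedges⟩ :=
    hC.exists_isPath_isPath_of_ne hP.start_mem hP.end_mem hxy
  have hgA : G.girth ≤ A.length + P.length := girth_le_length_add_length_of_ne hA hP.isPath
    fun hAP => heC ((hedges e).mpr (.inl (hAP ▸ heP)))
  have hgB : G.girth ≤ B.length + P.length := by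
    rw [← length_reverse B]
    refine girth_le_length_add_length_of_ne hB.reverse hP.isPath fun hBP => heC ?_
    exact (hedges e).mpr (.inr (by simpa [← hBP] using heP))
  have hshared : C.support.toFinset ∩ P.support.toFinset ⊆ {x, y} := fun z hz => by
    simp only [mem_inter, List.mem_toFinset] at hz
    simpa using hP.eq_or_eq_of_mem z hz.2 hz.1
  have hcount := card_add_card_le_card_add_card_inter C.support.toFinset P.support.toFinset
  rw [hC.card_support_toFinset, List.toFinset_card_of_nodup hP.isPath.support_nodup,
    length_support] at hcount
  have := (card_le_card hshared).trans (card_insert_le x {y})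
  simp only [card_singleton] at this
  omega

theorem three_mul_girth_le_of_isCycle {u v : V} {C : G.Walk u u} (hC : C.IsCycle)
    (hCg : C.length = G.girth) {D : G.Walk v v} (hD : D.IsCycle) {e : Sym2 V}
    (heD : e ∈ D.edges) (heC : e ∉ C.edges) : 3 * G.girth ≤ 2 * Fintype.card V + 2 := by
  classical
  by_cases hshared : #(C.support.toFinset ∩ D.support.toFinset) ≤ 1
  · have hcount := card_add_card_le_card_add_card_inter C.support.toFinset D.support.toFinset
    rw [hC.card_support_toFinset, hD.card_support_toFinset] at hcount
    have := G.girth_le_length hD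
    omega
  obtain ⟨s, hs, t, ht, hst⟩ := one_lt_card.mp (not_le.mp hshared)
  simp only [mem_inter, List.mem_toFinset] at hs ht
  obtain ⟨A, B, hA, hB, -, hedges⟩ := hD.exists_isPath_isPath_of_ne hs.2 ht.2 hst
  obtain ⟨x, y, P, hP, heP⟩ : ∃ (x y : V) (P : G.Walk x y),
      P.IsEar {z | z ∈ C.support} ∧ e ∈ P.edges := by
    rcases (hedges e).mp heD with heA | heB
    · exact hA.exists_isEar_mem_edges hs.1 ht.1 heA
    · exact hB.exists_isEar_mem_edges ht.1 hs.1 heB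
  exact three_mul_girth_le_of_isEar hC hCg hP heP heC

end SimpleGraph

/-- Every n-vertex graph with at least n+1 edges contains a cycle of length
at most 2n/3 + 1. -/
theorem excess_one_short_cycle {V : Type} [Fintype V] [DecidableEq V]
    (G : SimpleGraph V) [DecidableRel G.Adj]
    (h : Fintype.card V + 1 ≤ G.edgeFinset.card) :
    ∃ (v : V) (p : G.Walk v v), p.IsCycle ∧
      (p.length : ℚ) ≤ 2 * (Fintype.card V : ℚ) / 3 + 1 := by
  obtain ⟨e₀, -⟩ := Finset.card_pos.mp (by omega : 0 < #G.edgeFinset)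
  have : Nonempty V := ⟨e₀.out.1⟩
  obtain ⟨u, C, hC, hCg⟩ :=
    (SimpleGraph.exists_girth_eq_length (G := G)).mpr fun hG => by have := hG.card_edgeFinset_lt; omega
  obtain ⟨e, he⟩ := List.exists_mem_of_ne_nil C.edges (SimpleGraph.Walk.edges_eq_nil.not.mpr hC.not_nil)
  obtain ⟨v, D, hD, heD⟩ := SimpleGraph.exists_isCycle_notMem_edges (G := G) h e
  obtain ⟨e', he'D, he'C⟩ := List.exists_mem_notMem_of_length_le hD.edges_nodup he heD
    (by simpa only [SimpleGraph.Walk.length_edges, ← hCg] using G.girth_le_length hD)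
  have h3 := SimpleGraph.three_mul_girth_le_of_isCycle hC hCg.symm hD he'D he'C
  refine ⟨u, C, hC, ?_⟩
  rw [← hCg]
  have : (3 * G.girth : ℚ) ≤ 2 * Fintype.card V + 2 := by exact_mod_cast h3
  linarith
end

section
/- Every n-vertex graph with at least n+2 edges (an excess-2 graph) contains a cycle of length at most n/2 + 1. -/
/-!
Call four cycles of total length at most `L`, no edge lying on more than two of them, a four-cycle
packing of length `L`. One of its cycles has length at most `L / 4`, so it suffices to find a
packing of length `2 (n + 2)` in a graph with at least `n + 2` edges whose edges are spanned by `n`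
vertices. This goes by induction on edges plus vertices. Surplus edges and vertices of degree at
most one are deleted. A vertex `v` of degree two with neighbours `a`, `b` is suppressed, i.e. the
path `a v b` becomes the edge `ab`; since `ab` lies on at most two cycles of the packing, lifting
them back costs at most `2`. When `ab` is already an edge, suppression would create a multigraph;
instead the triangle `vab` twice and twice a cycle of the rest (which has as many edges as
vertices) form the packing. What is left has minimum degree three and `n + 2` edges, hence is `K₄`,
whose four triangles cover every edge exactly twice.
-/

open Finset

namespace SimpleGraph

variable {V : Type*} {G G' H : SimpleGraph V} {u v w x y z a b : V}

lemma Walk.isCycle_triangle (hxy : G.Adj x y) (hyz : G.Adj y z) (hzx : G.Adj z x) :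
    (cons hxy (cons hyz (cons hzx nil))).IsCycle := by
  simp [Walk.isCycle_def, hxy.ne, hyz.ne, hzx.ne, hxy.ne.symm, hzx.ne.symm]

lemma Walk.IsCycle.length_le_card [DecidableEq V] {c : G.Walk u u} (hc : c.IsCycle)
    {S : Finset V} (hS : G.support ⊆ S) : c.length ≤ #S := by
  calc c.length = #c.support.tail.toFinset := by
        rw [List.toFinset_card_of_nodup hc.support_nodup, List.length_tail, Walk.length_support]
        simp
    _ ≤ #S := card_le_card fun y hy => hS <| mem_support_of_mem_walk_support c hc.not_nil <|
        List.mem_of_mem_tail (List.mem_toFinset.1 hy)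

lemma Walk.IsCycle.exists_isCycle_snd_eq [DecidableEq V] {c : G.Walk u u} (hc : c.IsCycle)
    (h : s(a, b) ∈ c.edges) :
    ∃ c' : G.Walk a a, c'.IsCycle ∧ c'.snd = b ∧ c'.length = c.length ∧ c'.edges ⊆ c.edges := by
  have ha := c.fst_mem_support_of_mem_edges h
  have hrot := hc.rotate ha
  have hedges : ∀ e, e ∈ (c.rotate a ha).edges ↔ e ∈ c.edges := fun e =>
    (c.rotate_edges a ha).perm.mem_iff
  have hb : b ∈ (c.rotate a ha).toSubgraph.neighborSet a := by
    rwa [Subgraph.mem_neighborSet, ← Subgraph.mem_edgeSet, Walk.mem_edges_toSubgraph, hedges]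
  rw [hrot.neighborSet_toSubgraph_endpoint] at hb
  rcases hb with hb | hb
  · exact ⟨_, hrot, hb.symm, Walk.length_rotate .., fun e he => (hedges e).1 he⟩
  · refine ⟨_, hrot.reverse, by rw [Walk.snd_reverse, hb], by simp, fun e he => ?_⟩
    exact (hedges e).1 (by simpa using he)

lemma mem_edgeSet_of_le_sup_edge (hle : G' ≤ G ⊔ edge a b) {e : Sym2 V} (he : e ∈ G'.edgeSet)
    (hne : e ≠ s(a, b)) : e ∈ G.edgeSet := by
  rcases edgeSet_sup G _ ▸ edgeSet_mono hle he with h | h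
  · exact h
  · exact absurd (edgeSet_edge_subset h) hne

lemma notMem_of_notMem_support (hv : v ∉ G.support) {e : Sym2 V} (he : e ∈ G.edgeSet) :
    v ∉ e := by
  intro hve
  obtain ⟨x, rfl⟩ := Sym2.mem_iff_exists.1 hve
  exact hv ⟨x, he⟩

/-- `G'` is `G` with the inner vertex `v` of the path `a v b` suppressed. -/
lemma Walk.IsCycle.exists_lift_of_le_sup_edge [DecidableEq V] (hav : G.Adj a v)
    (hvb : G.Adj v b) (hle : G' ≤ G ⊔ edge a b) (hv : v ∉ G'.support) {c : G'.Walk u u}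
    (hc : c.IsCycle) :
    ∃ (w : V) (q : G.Walk w w), q.IsCycle ∧
      q.length ≤ c.length + (if s(a, b) ∈ c.edges then 1 else 0) ∧
      ∀ e ∈ q.edges, e ∈ c.edges ∨ (s(a, b) ∈ c.edges ∧ v ∈ e) := by
  by_cases hab : s(a, b) ∈ c.edges
  swap
  · refine ⟨u, c.transfer G fun e he => mem_edgeSet_of_le_sup_edge hle
      (c.edges_subset_edgeSet he) (by rintro rfl; exact hab he), hc.transfer _, by simp,
      fun e he => .inl (by simpa using he)⟩
  obtain ⟨c', hc', hsnd, hlen, hsub⟩ := hc.exists_isCycle_snd_eq hab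
  cases c' with
  | nil => exact absurd hc' Walk.not_isCycle_nil
  | cons h r =>
  rw [Walk.snd_cons] at hsnd
  subst hsnd
  rw [Walk.cons_isCycle_iff] at hc'
  have hr : ∀ e ∈ r.edges, e ∈ G.edgeSet := fun e he =>
    mem_edgeSet_of_le_sup_edge hle (r.edges_subset_edgeSet he) (by rintro rfl; exact hc'.2 he)
  have hvr : v ∉ r.support := fun h' =>
    hv (mem_support_of_mem_walk_support (cons h r) (by simp) (by simp [h']))
  refine ⟨a, cons hav (cons hvb (r.transfer G hr)), ?_, by simp [← hlen, hab], ?_⟩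
  · rw [Walk.cons_isCycle_iff, Walk.cons_isPath_iff, Walk.support_transfer]
    refine ⟨⟨hc'.1.transfer hr, hvr⟩, ?_⟩
    simp only [Walk.edges_cons, Walk.edges_transfer, List.mem_cons, not_or]
    refine ⟨fun he => h.ne ?_, fun he => hvr (r.snd_mem_support_of_mem_edges he)⟩
    simpa using Sym2.congr_left.1 (he.trans Sym2.eq_swap)
  · simp only [Walk.edges_cons, Walk.edges_transfer, List.mem_cons]
    rintro e (rfl | rfl | he)
    · exact .inr ⟨hab, by simp⟩
    · exact .inr ⟨hab, by simp⟩
    · exact .inl (hsub (by simp [he]))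

lemma exists_isCycle_of_two_le_degree [Fintype V] [DecidableEq V] [DecidableRel G.Adj]
    (hdeg : ∀ v ∈ G.support, 2 ≤ G.degree v) (hx : x ∈ G.support) :
    ∃ (u : V) (c : G.Walk u u), c.IsCycle := by
  -- Extend a path backwards from its start while possible; a neighbour of the start on the path
  -- other than the second vertex closes a cycle.
  suffices key : ∀ k x y (p : G.Walk x y), p.IsPath → x ∈ G.support →
      Fintype.card V ≤ p.length + k → ∃ (u : V) (c : G.Walk u u), c.IsCycle from
    key (Fintype.card V) x x .nil .nil hx (by simp)
  intro k
  induction k with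
  | zero => exact fun x y p hp _ hk => absurd hp.length_lt (by omega)
  | succ k ih =>
  intro x y p hp hx hk
  by_cases hext : ∃ z, G.Adj x z ∧ z ∉ p.support
  · obtain ⟨z, hxz, hz⟩ := hext
    exact ih z y (.cons hxz.symm p) (hp.cons hz) hxz.right_mem_support (by simp; omega)
  push Not at hext
  obtain ⟨z, hz, hzsnd⟩ := exists_mem_ne
    (s := G.neighborFinset x) (by rw [card_neighborFinset_eq_degree]; exact hdeg x hx) p.snd
  rw [mem_neighborFinset] at hz
  have hzp := hext z hz
  have hne : p.takeUntil z hzp ≠ hz.toWalk := by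
    intro h
    have := congrArg Walk.snd (p.take_spec hzp)
    rw [h] at this
    simp only [Adj.toWalk, Walk.cons_append, Walk.nil_append, Walk.snd_cons] at this
    exact hzsnd this
  obtain ⟨w, -, -, c, hc, -⟩ :=
    (hp.takeUntil hzp).exists_isCycle_length_le_add_of_ne (Walk.IsPath.of_adj hz) hne
  exact ⟨w, c, hc⟩

lemma card_edgeFinset_deleteIncidenceSet_add_degree [Fintype V] [DecidableEq V]
    [DecidableRel G.Adj] (v : V) :
    #(G.deleteIncidenceSet v).edgeFinset + G.degree v = #G.edgeFinset := by
  have := G.degree_le_card_edgeFinset (v := v)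
  rw [card_edgeFinset_deleteIncidenceSet]
  omega

-- The `Fintype` instance is implicit so that rewriting unifies it with the one in the goal; the
-- one found by instance search here can differ from it.
lemma card_edgeFinset_deleteEdges_singleton [Fintype V] [DecidableEq V] [DecidableRel G.Adj]
    {e : Sym2 V} {_ : Fintype (G.deleteEdges ↑({e} : Finset (Sym2 V))).edgeSet}
    (he : e ∈ G.edgeSet) :
    #(G.deleteEdges ↑({e} : Finset (Sym2 V))).edgeFinset = #G.edgeFinset - 1 := by
  rw [edgeFinset_deleteEdges, card_sdiff_of_subset (by simpa using he), card_singleton]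

lemma support_deleteIncidenceSet_subset_erase [DecidableEq V] {S : Finset V}
    (hS : G.support ⊆ S) (v : V) : (G.deleteIncidenceSet v).support ⊆ ↑(S.erase v) := by
  rw [coe_erase]
  exact (G.support_deleteIncidenceSet_subset v).trans (Set.sdiff_subset_sdiff_left hS)

lemma exists_isCycle_of_card_le_card_edgeFinset [Fintype V] [DecidableEq V]
    [DecidableRel G.Adj] {S : Finset V} (hS : G.support ⊆ S) (hcard : #S ≤ #G.edgeFinset)
    (hG : G ≠ ⊥) : ∃ (u : V) (c : G.Walk u u), c.IsCycle := by
  induction S using Finset.strongInduction generalizing G with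
  | H S ih =>
  obtain ⟨x, y, hxy⟩ := ne_bot_iff_exists_adj.1 hG
  by_cases hleaf : ∃ v ∈ S, G.degree v ≤ 1
  · obtain ⟨v, hv, hdeg⟩ := hleaf
    have h2 : 1 < #S :=
      one_lt_card.2 ⟨x, hS hxy.left_mem_support, y, hS hxy.right_mem_support, hxy.ne⟩
    have hE := G.card_edgeFinset_deleteIncidenceSet_add_degree v
    have hSv := card_erase_of_mem hv
    obtain ⟨u, c, hc⟩ := ih _ (erase_ssubset hv) (support_deleteIncidenceSet_subset_erase hS v)
      (by omega) (edgeFinset_nonempty.1 (card_pos.1 (by omega)))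
    exact ⟨u, c.mapLe (G.deleteIncidenceSet_le v), hc.mapLe _⟩
  push Not at hleaf
  exact exists_isCycle_of_two_le_degree (fun v hv => hleaf v (hS hv)) hxy.left_mem_support

lemma exists_adj_adj_of_degree_eq_two [Fintype V] [DecidableEq V] [DecidableRel G.Adj]
    (hv : G.degree v = 2) : ∃ a b, a ≠ b ∧ G.Adj v a ∧ G.Adj v b := by
  obtain ⟨a, b, hne, hnbr⟩ := card_eq_two.1 ((card_neighborFinset_eq_degree G v).trans hv)
  refine ⟨a, b, hne, ?_, ?_⟩ <;> rw [← mem_neighborFinset, hnbr] <;> simp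

lemma notMem_support_deleteIncidenceSet_sup_edge (ha : v ≠ a) (hb : v ≠ b) :
    v ∉ (G.deleteIncidenceSet v ⊔ edge a b).support := by
  rintro ⟨w, hw | hw⟩
  · exact (deleteIncidenceSet_adj.1 hw).2.1 rfl
  · rw [edge_adj] at hw
    grind

lemma support_deleteIncidenceSet_sup_edge_subset [DecidableEq V] {S : Finset V}
    (hS : G.support ⊆ S) (hva : G.Adj v a) (hvb : G.Adj v b) :
    (G.deleteIncidenceSet v ⊔ edge a b).support ⊆ ↑(S.erase v) := by
  intro w hw
  have hwv : w ≠ v := by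
    rintro rfl
    exact notMem_support_deleteIncidenceSet_sup_edge hva.ne hvb.ne hw
  refine mem_erase.2 ⟨hwv, ?_⟩
  obtain ⟨z, hz | hz⟩ := hw
  · exact hS (deleteIncidenceSet_le G v hz).left_mem_support
  · rw [edge_adj] at hz
    obtain ⟨⟨rfl, -⟩ | ⟨rfl, -⟩, -⟩ := hz
    · exact hS hva.right_mem_support
    · exact hS hvb.right_mem_support

-- Implicit `Fintype` instance as in `card_edgeFinset_deleteEdges_singleton`.
lemma card_edgeFinset_deleteIncidenceSet_sup_edge [Fintype V] [DecidableEq V]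
    [DecidableRel G.Adj] {_ : Fintype (G.deleteIncidenceSet v ⊔ edge a b).edgeSet}
    (hdeg : G.degree v = 2) (hab : ¬G.Adj a b) (hne : a ≠ b) :
    #(G.deleteIncidenceSet v ⊔ edge a b).edgeFinset = #G.edgeFinset - 1 := by
  have := G.card_edgeFinset_deleteIncidenceSet_add_degree v
  rw [(G.deleteIncidenceSet v).card_edgeFinset_sup_edge
    (fun h => hab (deleteIncidenceSet_le G v h)) hne]
  omega

lemma isNClique_four_of_three_le_degree [Fintype V] [DecidableEq V] [DecidableRel G.Adj]
    {S : Finset V} (hS : G.support ⊆ S) (hcard : #G.edgeFinset ≤ #S + 2)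
    (hdeg : ∀ v ∈ S, 3 ≤ G.degree v) (hx : x ∈ S) : G.IsNClique 4 S := by
  have hnbr : ∀ v ∈ S, G.neighborFinset v ⊆ S.erase v := fun v _ w hw => by
    rw [mem_neighborFinset] at hw
    exact mem_erase.2 ⟨hw.ne', hS hw.right_mem_support⟩
  have hsum : ∑ v ∈ S, G.degree v = 2 * #G.edgeFinset := by
    rw [← G.sum_degrees_eq_twice_card_edges]
    exact sum_subset (subset_univ S) fun v _ hv =>
      (G.degree_eq_zero_iff_notMem_support v).2 fun h => hv (hS h)
  have hle : 3 * #S ≤ 2 * #G.edgeFinset := by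
    simpa [hsum, mul_comm] using card_nsmul_le_sum S _ 3 hdeg
  have hx3 := (hdeg x hx).trans (card_neighborFinset_eq_degree G x ▸ card_le_card (hnbr x hx))
  rw [card_erase_of_mem hx] at hx3
  have hS4 : #S = 4 := by omega
  refine ⟨fun v hv w hw hvw => ?_, hS4⟩
  have : G.neighborFinset v = S.erase v := eq_of_subset_of_card_le (hnbr v hv) <| by
    rw [card_erase_of_mem hv, card_neighborFinset_eq_degree]
    have := hdeg v hv
    omega
  rw [← mem_neighborFinset, this]
  exact mem_erase.2 ⟨hvw.symm, hw⟩

def HasFourCyclePacking [DecidableEq V] (G : SimpleGraph V) (L : ℕ) : Prop :=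
  ∃ c : Fin 4 → Σ u : V, G.Walk u u, (∀ i, (c i).2.IsCycle) ∧
    (∀ e : Sym2 V, #{i | e ∈ (c i).2.edges} ≤ 2) ∧ ∑ i, (c i).2.length ≤ L

lemma HasFourCyclePacking.mono [DecidableEq V] {L L' : ℕ} (hP : G.HasFourCyclePacking L)
    (hGH : G ≤ H) (hL : L ≤ L') : H.HasFourCyclePacking L' := by
  obtain ⟨c, hcyc, hmult, hlen⟩ := hP
  refine ⟨fun i => ⟨(c i).1, (c i).2.mapLe hGH⟩, fun i => (hcyc i).mapLe hGH, ?_, ?_⟩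
  · simpa only [Walk.edges_mapLe_eq_edges] using hmult
  · simpa only [Walk.length_mapLe] using hlen.trans hL

lemma hasFourCyclePacking_of_disjoint_edges [DecidableEq V] {c₁ : G.Walk u u}
    {c₂ : G.Walk w w} (h₁ : c₁.IsCycle) (h₂ : c₂.IsCycle) (hdisj : c₁.edges.Disjoint c₂.edges) :
    G.HasFourCyclePacking (2 * (c₁.length + c₂.length)) := by
  refine ⟨![⟨u, c₁⟩, ⟨u, c₁⟩, ⟨w, c₂⟩, ⟨w, c₂⟩], fun i => ?_, fun e => ?_, ?_⟩
  · fin_cases i <;> assumption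
  · have := @hdisj e
    rw [card_filter, Fin.sum_univ_four]
    by_cases h₁ : e ∈ c₁.edges <;> by_cases h₂ : e ∈ c₂.edges <;> simp_all
  · simp [Fin.sum_univ_four]
    omega

lemma hasFourCyclePacking_of_isNClique_four [DecidableEq V] {s : Finset V}
    (hs : G.IsNClique 4 s) : G.HasFourCyclePacking 12 := by
  obtain ⟨w, x, y, z, hwx, hwy, hwz, hxy, hxz, hyz, rfl⟩ := card_eq_four.1 hs.card_eq
  have adj : ∀ p ∈ ({w, x, y, z} : Finset V), ∀ q ∈ ({w, x, y, z} : Finset V), p ≠ q →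
      G.Adj p q := fun p hp q hq hpq => hs.isClique (mem_coe.2 hp) (mem_coe.2 hq) hpq
  have awx := adj w (by simp) x (by simp) hwx
  have awy := adj w (by simp) y (by simp) hwy
  have awz := adj w (by simp) z (by simp) hwz
  have axy := adj x (by simp) y (by simp) hxy
  have axz := adj x (by simp) z (by simp) hxz
  have ayz := adj y (by simp) z (by simp) hyz
  refine ⟨![⟨w, .cons awx (.cons axy (.cons awy.symm .nil))⟩,
    ⟨w, .cons awx (.cons axz (.cons awz.symm .nil))⟩,
    ⟨w, .cons awy (.cons ayz (.cons awz.symm .nil))⟩,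
    ⟨x, .cons axy (.cons ayz (.cons axz.symm .nil))⟩], fun i => ?_, fun e => ?_, ?_⟩
  · fin_cases i <;> exact Walk.isCycle_triangle ..
  · induction e using Sym2.ind with | h p q =>
    simp only [card_filter, Fin.sum_univ_four, Fin.isValue, Matrix.cons_val, Walk.edges_cons,
      Walk.edges_nil, List.mem_cons, List.not_mem_nil, or_false, Sym2.eq_iff]
    split_ifs <;> first | omega | (exfalso; grind)
  · simp [Fin.sum_univ_four]

lemma HasFourCyclePacking.of_le_sup_edge [DecidableEq V] {L : ℕ} (hav : G.Adj a v)
    (hvb : G.Adj v b) (hle : G' ≤ G ⊔ edge a b) (hv : v ∉ G'.support)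
    (hP : G'.HasFourCyclePacking L) : G.HasFourCyclePacking (L + 2) := by
  obtain ⟨c, hcyc, hmult, hlen⟩ := hP
  choose w q hq hqlen hqedges using fun i => (hcyc i).exists_lift_of_le_sup_edge hav hvb hle hv
  refine ⟨fun i => ⟨w i, q i⟩, hq, fun e => ?_, ?_⟩
  · by_cases hve : v ∈ e
    · refine (card_le_card fun i => ?_).trans (hmult s(a, b))
      simp only [mem_filter, mem_univ, true_and]
      exact fun he => ((hqedges i e he).resolve_left fun h =>
        notMem_of_notMem_support hv ((c i).2.edges_subset_edgeSet h) hve).1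
    · refine (card_le_card fun i => ?_).trans (hmult e)
      simp only [mem_filter, mem_univ, true_and]
      exact fun he => (hqedges i e he).resolve_right fun h => hve h.2
  · calc ∑ i, (q i).length
        ≤ ∑ i, ((c i).2.length + if s(a, b) ∈ (c i).2.edges then 1 else 0) :=
          sum_le_sum fun i _ => hqlen i
      _ = ∑ i, (c i).2.length + #{i | s(a, b) ∈ (c i).2.edges} := by
          rw [sum_add_distrib, card_filter]
      _ ≤ L + 2 := add_le_add hlen (hmult _)

lemma HasFourCyclePacking.of_deleteIncidenceSet_sup_edge [DecidableEq V] {L : ℕ}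
    (hva : G.Adj v a) (hvb : G.Adj v b)
    (hP : (G.deleteIncidenceSet v ⊔ edge a b).HasFourCyclePacking L) :
    G.HasFourCyclePacking (L + 2) :=
  hP.of_le_sup_edge hva.symm hvb (sup_le_sup_right (G.deleteIncidenceSet_le v) _)
    (notMem_support_deleteIncidenceSet_sup_edge hva.ne hvb.ne)

lemma hasFourCyclePacking_of_adj_of_degree_eq_two [Fintype V] [DecidableEq V]
    [DecidableRel G.Adj] {S : Finset V} (hS : G.support ⊆ S) (hcard : #S + 2 ≤ #G.edgeFinset)
    (hdeg : G.degree v = 2) (hva : G.Adj v a) (hvb : G.Adj v b) (hab : G.Adj a b) :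
    G.HasFourCyclePacking (2 * (#S + 2)) := by
  set H := (G.deleteIncidenceSet v).deleteEdges ↑({s(a, b)} : Finset (Sym2 V))
  have hHG : H ≤ G := (deleteEdges_le _).trans (G.deleteIncidenceSet_le v)
  have hHS : H.support ⊆ ↑(S.erase v) :=
    (support_mono (deleteEdges_le _)).trans (support_deleteIncidenceSet_subset_erase hS v)
  have h3 : 2 < #S := two_lt_card.2 ⟨v, hS hva.left_mem_support, a, hS hva.right_mem_support,
    b, hS hvb.right_mem_support, hva.ne, hvb.ne, hab.ne⟩
  have hHcard : #H.edgeFinset + 3 = #G.edgeFinset := by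
    have hab' : s(a, b) ∈ (G.deleteIncidenceSet v).edgeSet :=
      deleteIncidenceSet_adj.2 ⟨hab, hva.ne', hvb.ne'⟩
    have := G.card_edgeFinset_deleteIncidenceSet_add_degree v
    have := card_pos.2 ⟨_, mem_edgeFinset.2 hab'⟩
    rw [card_edgeFinset_deleteEdges_singleton hab']
    omega
  have hv := card_erase_of_mem (hS hva.left_mem_support)
  obtain ⟨u, D, hD⟩ := exists_isCycle_of_card_le_card_edgeFinset hHS (by omega)
    (edgeFinset_nonempty.1 (card_pos.1 (by omega)))
  have hDlen := hD.length_le_card hHS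
  have hdisj : (Walk.cons hva (.cons hab (.cons hvb.symm .nil))).edges.Disjoint
      (D.mapLe hHG).edges := by
    rw [Walk.edges_mapLe_eq_edges]
    intro e he heD
    have := D.edges_subset_edgeSet heD
    simp only [Walk.edges_cons, Walk.edges_nil, List.mem_cons, List.not_mem_nil, or_false] at he
    rcases he with rfl | rfl | rfl <;> simp [H, deleteIncidenceSet_adj] at this
  refine (hasFourCyclePacking_of_disjoint_edges (Walk.isCycle_triangle hva hab hvb.symm)
    (hD.mapLe hHG) hdisj).mono le_rfl ?_
  simp only [Walk.length_cons, Walk.length_nil, Walk.length_mapLe]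
  omega

theorem hasFourCyclePacking_of_card_add_two_le [Fintype V] [DecidableEq V] (G : SimpleGraph V)
    [DecidableRel G.Adj] (S : Finset V) (hS : G.support ⊆ S) (hcard : #S + 2 ≤ #G.edgeFinset) :
    G.HasFourCyclePacking (2 * (#S + 2)) := by
  induction hn : #G.edgeFinset + #S using Nat.strong_induction_on generalizing G S with
  | _ n ih =>
  subst hn
  have step : ∀ (G' : SimpleGraph V) [DecidableRel G'.Adj] (S' : Finset V), G'.support ⊆ S' →
      #S' + 2 ≤ #G'.edgeFinset → #G'.edgeFinset + #S' < #G.edgeFinset + #S →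
      G'.HasFourCyclePacking (2 * (#S' + 2)) :=
    fun G' _ S' hS' hcard' hlt => ih _ hlt G' S' hS' hcard' rfl
  by_cases hsurplus : #S + 3 ≤ #G.edgeFinset
  · obtain ⟨e, he⟩ := card_pos.1 (by omega : 0 < #G.edgeFinset)
    refine (step (G.deleteEdges ↑({e} : Finset (Sym2 V))) S
      ((support_mono (deleteEdges_le _)).trans hS) ?_ ?_).mono (deleteEdges_le _) le_rfl
    all_goals rw [card_edgeFinset_deleteEdges_singleton (mem_edgeFinset.1 he)]; omega
  by_cases hleaf : ∃ v ∈ S, G.degree v ≤ 1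
  · obtain ⟨v, hv, hdeg⟩ := hleaf
    have := G.card_edgeFinset_deleteIncidenceSet_add_degree v
    have := card_erase_of_mem hv
    have := card_pos.2 ⟨v, hv⟩
    exact (step (G.deleteIncidenceSet v) (S.erase v) (support_deleteIncidenceSet_subset_erase hS v)
      (by omega) (by omega)).mono (G.deleteIncidenceSet_le v) (by omega)
  push Not at hleaf
  by_cases hdeg2 : ∃ v, G.degree v = 2
  · obtain ⟨v, hv⟩ := hdeg2
    obtain ⟨a, b, hne, hva, hvb⟩ := exists_adj_adj_of_degree_eq_two hv
    by_cases hab : G.Adj a b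
    · exact hasFourCyclePacking_of_adj_of_degree_eq_two hS hcard hv hva hvb hab
    have := card_erase_of_mem (hS hva.left_mem_support)
    have := card_pos.2 ⟨v, hS hva.left_mem_support⟩
    refine ((step (G.deleteIncidenceSet v ⊔ edge a b) (S.erase v)
      (support_deleteIncidenceSet_sup_edge_subset hS hva hvb) ?_ ?_).of_deleteIncidenceSet_sup_edge
      hva hvb).mono le_rfl (by omega)
    all_goals rw [card_edgeFinset_deleteIncidenceSet_sup_edge hv hab hne]; omega
  push Not at hdeg2
  obtain ⟨x, y, hxy⟩ :=
    ne_bot_iff_exists_adj.1 (edgeFinset_nonempty.1 (card_pos.1 (by omega : 0 < #G.edgeFinset)))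
  have hK4 := isNClique_four_of_three_le_degree hS (by omega)
    (fun v hv => by have := hleaf v hv; have := hdeg2 v; omega) (hS hxy.left_mem_support)
  rw [hK4.card_eq]
  exact hasFourCyclePacking_of_isNClique_four hK4

end SimpleGraph

/-- Every n-vertex graph with at least n+2 edges contains a cycle of length
at most n/2 + 1. -/
theorem excess_two_short_cycle {V : Type} [Fintype V] [DecidableEq V]
    (G : SimpleGraph V) [DecidableRel G.Adj]
    (h : Fintype.card V + 2 ≤ G.edgeFinset.card) :
    ∃ (v : V) (p : G.Walk v v), p.IsCycle ∧
      (p.length : ℚ) ≤ (Fintype.card V : ℚ) / 2 + 1 := by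
  obtain ⟨c, hcyc, -, hlen⟩ :=
    G.hasFourCyclePacking_of_card_add_two_le univ (by simp) (by simpa using h)
  have hsum : ∑ i, ((c i).2.length : ℚ) ≤ ∑ _i : Fin 4, ((Fintype.card V : ℚ) / 2 + 1) := by
    have : ((∑ i, (c i).2.length : ℕ) : ℚ) ≤ 2 * (Fintype.card V + 2) := by exact_mod_cast hlen
    push_cast at this
    simp only [sum_const, card_univ, Fintype.card_fin, nsmul_eq_mul]
    linarith
  obtain ⟨i, -, hi⟩ := exists_le_of_sum_le univ_nonempty hsum
  exact ⟨(c i).1, (c i).2, hcyc i, hi⟩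
end

section
/- Let H be a simple edge-coloured graph in which each colour class has size at most r, and let R be a rainbow subgraph of H with |E(R)| = |V(R)| + k (excess-k) such that no proper subset of V(R) supports an excess-k rainbow subgraph of H. Then either H contains two parallel edges of distinct colours, or the number of chords of R in H (edges of H with both ends in V(R) not belonging to R) is at most max{C(2k+2, 2), 6k(r-1)}. -/
/-!
If no two parallel edges have distinct colours, an edge is determined by its ends. Minimality of
`V(R)` forces every rainbow `T` with `V(T) ⊊ V(R)` to have excess below `k`, since deleting edges
that leave `V(T)` unchanged would bring the excess down to exactly `k`. Hence `R` has minimum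
degree `2`, and by the handshake lemma the vertices of degree `≥ 3` number at most `2k` and meet
at most `6k` edges of `R`. If `|V(R)| ≤ 2k + 2`, count pairs. Otherwise each chord `e` misses a
vertex `v` of degree `2`; adding `e` and deleting the two edges at `v` would give a rainbow graph
on fewer vertices with excess at least `k`, so `e` has the colour of some `f ∈ R`. Swapping `f`
for `e` keeps `V(R)` and the excess, so every endpoint of `f` of degree `2` lies on `e`; as
`e ≠ f`, some endpoint of `f` has degree `≥ 3`. Each of the at most `6k` such edges `f` shares
its colour with at most `r - 1` chords.
-/

open Finset

namespace RainbowExcess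

variable {V E C : Type} (ends : E → Sym2 V)

def vertexSet (T : Set E) : Set V := {v | ∃ e ∈ T, v ∈ ends e}

def incidentEdges (v : V) : Set E := {e | v ∈ ends e}

noncomputable def degree (T : Set E) (v : V) : ℕ := (T ∩ incidentEdges ends v).ncard

def chords (T : Set E) : Set E := {e | e ∉ T ∧ ∀ v ∈ ends e, v ∈ vertexSet ends T}

variable {ends}

theorem vertexSet_mono {T T' : Set E} (h : T ⊆ T') : vertexSet ends T ⊆ vertexSet ends T' :=
  fun _ ⟨e, he, hv⟩ => ⟨e, h he, hv⟩

theorem notMem_vertexSet_sdiff_incidentEdges (T : Set E) (v : V) :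
    v ∉ vertexSet ends (T \ incidentEdges ends v) :=
  fun ⟨_, ⟨_, hev⟩, hv⟩ => hev hv

theorem degree_eq_zero {T : Set E} {v : V} (hv : v ∉ vertexSet ends T) : degree ends T v = 0 := by
  have hempty : T ∩ incidentEdges ends v = ∅ :=
    Set.eq_empty_iff_forall_notMem.2 fun e he => hv ⟨e, he.1, he.2⟩
  rw [degree, hempty, Set.ncard_empty]

theorem ncard_sdiff_incidentEdges_add_degree [Finite E] (T : Set E) (v : V) :
    (T \ incidentEdges ends v).ncard + degree ends T v = T.ncard := by
  rw [add_comm, degree, Set.ncard_inter_add_ncard_sdiff_eq_ncard T _ (Set.toFinite T)]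

theorem sum_degree_eq_two_mul_ncard [Fintype V] [Fintype E] (hloop : ∀ e, ¬(ends e).IsDiag)
    (T : Set E) : ∑ v, degree ends T v = 2 * T.ncard := by
  classical
  calc ∑ v, degree ends T v = ∑ v, #{e ∈ T.toFinset | v ∈ ends e} := by
        refine sum_congr rfl fun v _ => ?_
        have hfin : T ∩ incidentEdges ends v = ↑{e ∈ T.toFinset | v ∈ ends e} := by
          ext e
          simp [incidentEdges]
        rw [degree, hfin, Set.ncard_coe_finset]
    _ = ∑ e ∈ T.toFinset, #{v | v ∈ ends e} :=
        sum_card_bipartiteAbove_eq_sum_card_bipartiteBelow _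
    _ = ∑ e ∈ T.toFinset, 2 := sum_congr rfl fun e _ => by
        rw [← Sym2.card_toFinset_of_not_isDiag _ (hloop e)]
        congr 1
        ext v
        simp [Sym2.mem_toFinset]
    _ = 2 * T.ncard := by rw [sum_const, smul_eq_mul, Set.ncard_eq_toFinset_card', mul_comm]

theorem ncard_incident_le_sum_degree [Finite E] (T : Set E) (B : Finset V) :
    {f ∈ T | ∃ v ∈ B, v ∈ ends f}.ncard ≤ ∑ v ∈ B, degree ends T v := by
  refine (Set.ncard_le_ncard ?_ (Set.toFinite _)).trans (B.set_ncard_biUnion_le _)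
  rintro f ⟨hf, v, hv, hvf⟩
  exact Set.mem_biUnion hv ⟨hf, hvf⟩

theorem exists_vertexSet_sdiff_singleton_eq [Finite V] [Finite E] {T : Set E}
    (h : (vertexSet ends T).ncard < T.ncard) :
    ∃ g ∈ T, vertexSet ends (T \ {g}) = vertexSet ends T := by
  by_contra! hc
  have hown : ∀ g ∈ T, ∃ v ∈ ends g, ∀ g' ∈ T, v ∈ ends g' → g' = g := by
    intro g hg
    by_contra! hshared
    refine hc g hg (subset_antisymm (vertexSet_mono Set.sdiff_subset) ?_)
    rintro v ⟨e, he, hve⟩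
    by_cases heg : e = g
    · obtain ⟨g', hg', hvg', hne⟩ := hshared v (heg ▸ hve)
      exact ⟨g', ⟨hg', hne⟩, hvg'⟩
    · exact ⟨e, ⟨he, heg⟩, hve⟩
  obtain ⟨g, -⟩ := Set.nonempty_of_ncard_ne_zero (s := T) (by omega)
  have : Nonempty V := ⟨(ends g).out.1⟩
  choose! φ hφ huniq using hown
  have := Set.ncard_le_ncard_of_injOn (t := vertexSet ends T) φ (fun g hg => ⟨g, hg, hφ g hg⟩)
    (fun g₁ h₁ g₂ h₂ heq => huniq g₂ h₂ g₁ h₁ (heq ▸ hφ g₁ h₁)) (Set.toFinite _)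
  omega

theorem ncard_le_choose_two [Fintype V] (hloop : ∀ e, ¬(ends e).IsDiag) {T : Set E}
    (hinj : Set.InjOn ends T) {W : Set V} (hTW : ∀ e ∈ T, ∀ v ∈ ends e, v ∈ W) :
    T.ncard ≤ W.ncard.choose 2 := by
  classical
  have hpair : ∀ z : Sym2 V, ¬z.IsDiag → (∀ v ∈ z, v ∈ W) →
      z ∈ W.toFinset.offDiag.image Sym2.mk.uncurry := by
    refine Sym2.ind fun a b hab hz => mem_image.2 ⟨(a, b), ?_, rfl⟩
    simpa [hz a (Sym2.mem_mk_left a b), hz b (Sym2.mem_mk_right a b)] using hab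
  calc T.ncard ≤ (W.toFinset.offDiag.image Sym2.mk.uncurry : Set (Sym2 V)).ncard :=
        Set.ncard_le_ncard_of_injOn ends (fun e he => hpair _ (hloop e) (hTW e he)) hinj
    _ = W.ncard.choose 2 := by
        rw [Set.ncard_coe_finset, Sym2.card_image_offDiag, Set.ncard_eq_toFinset_card']

theorem ncard_le_ncard_mul_of_forall_exists_col_eq [Finite E] {col : E → C} {r : ℕ}
    (hsize : ∀ a, {e | col e = a}.ncard ≤ r) {A F : Set E}
    (hA : ∀ e ∈ A, ∃ f ∈ F, f ≠ e ∧ col f = col e) : A.ncard ≤ F.ncard * (r - 1) := by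
  have hF := F.toFinite
  calc A.ncard ≤ (⋃ f ∈ hF.toFinset, {g | col g = col f} \ {f}).ncard := by
        refine Set.ncard_le_ncard (fun e he => ?_) (Set.toFinite _)
        obtain ⟨f, hf, hne, hcol⟩ := hA e he
        exact Set.mem_biUnion (hF.mem_toFinset.2 hf) ⟨hcol.symm, hne.symm⟩
    _ ≤ ∑ f ∈ hF.toFinset, ({g | col g = col f} \ {f}).ncard := set_ncard_biUnion_le _ _
    _ ≤ ∑ _f ∈ hF.toFinset, (r - 1) := sum_le_sum fun f _ => by
        rw [Set.ncard_sdiff_singleton_of_mem (show f ∈ {g | col g = col f} from rfl)]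
        exact Nat.sub_le_sub_right (hsize _) 1
    _ = F.ncard * (r - 1) := by rw [sum_const, smul_eq_mul, Set.ncard_eq_toFinset_card F hF]

theorem sum_filter_three_le_le_six_mul {ι : Type*} (s : Finset ι) (d : ι → ℕ) {k : ℕ}
    (h2 : ∀ i ∈ s, 2 ≤ d i) (hsum : ∑ i ∈ s, d i = 2 * (#s + k)) :
    ∑ i ∈ s with 3 ≤ d i, d i ≤ 6 * k := by
  have hsurplus : ∑ i ∈ s, (d i - 2) = 2 * k := by
    have : ∑ i ∈ s, d i = ∑ i ∈ s, ((d i - 2) + 2) :=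
      sum_congr rfl fun i hi => by have := h2 i hi; omega
    rw [sum_add_distrib, sum_const, smul_eq_mul] at this
    omega
  calc ∑ i ∈ s with 3 ≤ d i, d i ≤ ∑ i ∈ s with 3 ≤ d i, 3 * (d i - 2) :=
        sum_le_sum fun i hi => by have := (mem_filter.1 hi).2; omega
    _ = 3 * ∑ i ∈ s with 3 ≤ d i, (d i - 2) := (mul_sum _ _ _).symm
    _ ≤ 3 * ∑ i ∈ s, (d i - 2) :=
        Nat.mul_le_mul_left _ (sum_le_sum_of_subset (filter_subset _ _))
    _ = 6 * k := by rw [hsurplus]; ring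

variable (ends) in
def IsExcessMinimal (col : E → C) (k : ℕ) (W : Set V) : Prop :=
  ∀ T : Set E, Set.InjOn col T → T.ncard = (vertexSet ends T).ncard + k →
    ¬vertexSet ends T ⊂ W

namespace IsExcessMinimal

section

variable [Finite V] [Finite E] {col : E → C} {k : ℕ} {W : Set V}

theorem ncard_lt (hW : IsExcessMinimal ends col k W) {T : Set E} (hT : Set.InjOn col T)
    (hTW : vertexSet ends T ⊂ W) : T.ncard < (vertexSet ends T).ncard + k := by
  induction hn : T.ncard using Nat.strong_induction_on generalizing T with
  | _ n ih =>
    by_contra! hle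
    rcases hle.eq_or_lt with heq | hlt
    · exact hW T hT (hn ▸ heq.symm) hTW
    obtain ⟨g, hg, hsame⟩ :=
      exists_vertexSet_sdiff_singleton_eq (ends := ends) (T := T) (by omega)
    have hcard : (T \ {g}).ncard = n - 1 := hn ▸ Set.ncard_sdiff_singleton_of_mem hg
    have := ih (n - 1) (by omega) (hT.mono Set.sdiff_subset) (hsame ▸ hTW) hcard
    rw [hsame] at this
    omega

theorem ncard_add_one_lt (hW : IsExcessMinimal ends col k W) {T : Set E} (hT : Set.InjOn col T)
    (hTW : vertexSet ends T ⊆ W) {v : V} (hv : v ∈ W) (hvT : v ∉ vertexSet ends T) :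
    T.ncard + 1 < W.ncard + k := by
  have hss : vertexSet ends T ⊂ W := (Set.ssubset_iff_of_subset hTW).2 ⟨v, hv, hvT⟩
  have := Set.ncard_lt_ncard hss
  have := hW.ncard_lt hT hss
  omega

theorem two_le_degree (hW : IsExcessMinimal ends col k W) {T : Set E} (hT : Set.InjOn col T)
    (hTW : vertexSet ends T = W) (hk : W.ncard + k ≤ T.ncard) {v : V} (hv : v ∈ W) :
    2 ≤ degree ends T v := by
  by_contra! hlt
  have := hW.ncard_add_one_lt (hT.mono Set.sdiff_subset)
    (hTW ▸ vertexSet_mono Set.sdiff_subset) hv (notMem_vertexSet_sdiff_incidentEdges T v)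
  have := ncard_sdiff_incidentEdges_add_degree (ends := ends) T v
  omega

section Chord

variable (hW : IsExcessMinimal ends col k W) {S : Set E} (hS : Set.InjOn col S)
  (hSW : vertexSet ends S = W) (hcard : S.ncard = W.ncard + k)
  {e : E} (he : e ∉ S) (heW : ∀ v ∈ ends e, v ∈ W)
include hW hS hSW hcard he heW

theorem exists_mem_col_eq {v : V} (hv : v ∈ W) (hve : v ∉ ends e)
    (hdeg : degree ends S v ≤ 2) : ∃ f ∈ S, col f = col e := by
  by_contra! hnew
  have heS' : e ∉ S \ incidentEdges ends v := fun h => he h.1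
  have hT : Set.InjOn col (insert e (S \ incidentEdges ends v)) :=
    (Set.injOn_insert heS').2 ⟨hS.mono Set.sdiff_subset,
      fun ⟨f, hf, hcol⟩ => hnew f hf.1 hcol⟩
  have hTW : vertexSet ends (insert e (S \ incidentEdges ends v)) ⊆ W := by
    rintro w ⟨g, rfl | hg, hwg⟩
    · exact heW w hwg
    · exact hSW ▸ ⟨g, hg.1, hwg⟩
  have hvT : v ∉ vertexSet ends (insert e (S \ incidentEdges ends v)) := by
    rintro ⟨g, rfl | hg, hvg⟩
    · exact hve hvg
    · exact hg.2 hvg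
  have := hW.ncard_add_one_lt hT hTW hv hvT
  rw [Set.ncard_insert_of_notMem heS'] at this
  have := ncard_sdiff_incidentEdges_add_degree (ends := ends) S v
  omega

theorem mem_ends_of_degree_le_two {f : E} (hf : f ∈ S) (hcol : col f = col e) {w : V}
    (hwf : w ∈ ends f) (hdeg : degree ends S w ≤ 2) : w ∈ ends e := by
  by_contra hwe
  have hdeg2 : ∀ x ∈ W, 2 ≤ degree ends S x := fun x => hW.two_le_degree hS hSW hcard.ge
  have heS' : e ∉ S \ {f} := fun h => he h.1
  have hT : Set.InjOn col (insert e (S \ {f})) :=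
    (Set.injOn_insert heS').2 ⟨hS.mono Set.sdiff_subset,
      fun ⟨g, hg, hcolg⟩ => hg.2 (hS hg.1 hf (hcolg.trans hcol.symm))⟩
  have hTW : vertexSet ends (insert e (S \ {f})) = W := by
    refine subset_antisymm ?_ fun x hx => ?_
    · rintro x ⟨g, rfl | hg, hxg⟩
      · exact heW x hxg
      · exact hSW ▸ ⟨g, hg.1, hxg⟩
    · obtain ⟨g, ⟨hg, hxg⟩, hgf⟩ := Set.exists_ne_of_one_lt_ncard (hdeg2 x hx) f
      exact ⟨g, Set.mem_insert_of_mem _ ⟨hg, hgf⟩, hxg⟩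
  have hTcard : (insert e (S \ {f})).ncard = S.ncard := by
    rw [Set.ncard_insert_of_notMem heS', Set.ncard_sdiff_singleton_of_mem hf]
    have := (Set.ncard_pos (Set.toFinite S)).2 ⟨f, hf⟩
    omega
  have h2 := hW.two_le_degree hT hTW (hcard ▸ hTcard.ge) (hSW.subset ⟨f, hf, hwf⟩)
  have hsub :
      insert e (S \ {f}) ∩ incidentEdges ends w ⊆ (S ∩ incidentEdges ends w) \ {f} := by
    rintro g ⟨rfl | ⟨hg, hgf⟩, hwg⟩
    · exact absurd hwg hwe
    · exact ⟨⟨hg, hwg⟩, hgf⟩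
  have := Set.ncard_le_ncard hsub
  rw [Set.ncard_sdiff_singleton_of_mem
    (show f ∈ S ∩ incidentEdges ends w from ⟨hf, hwf⟩)] at this
  unfold degree at h2 hdeg
  omega

theorem exists_three_le_degree (hsimple : ∀ e f, col e = col f → ends e = ends f → e = f)
    (hloop : ∀ e, ¬(ends e).IsDiag) {f : E} (hf : f ∈ S) (hcol : col f = col e) :
    ∃ v ∈ ends f, 3 ≤ degree ends S v := by
  by_contra! hsmall
  have hon : ∀ w ∈ ends f, w ∈ ends e := fun w hw =>
    hW.mem_ends_of_degree_le_two hS hSW hcard he heW hf hcol hw (by have := hsmall w hw; omega)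
  induction hfab : ends f using Sym2.ind with
  | _ a b =>
    have hab : a ≠ b := by simpa [hfab] using hloop f
    have hends : ends e = ends f := by
      rw [hfab, ← Sym2.mem_and_mem_iff hab]
      exact ⟨hon a (hfab ▸ Sym2.mem_mk_left a b), hon b (hfab ▸ Sym2.mem_mk_right a b)⟩
    exact he (hsimple e f hcol.symm hends ▸ hf)

end Chord

end

theorem ncard_chords_le [Fintype V] [Fintype E] {col : E → C} {k r : ℕ} {S : Set E}
    (hW : IsExcessMinimal ends col k (vertexSet ends S)) (hS : Set.InjOn col S)
    (hcard : S.ncard = (vertexSet ends S).ncard + k)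
    (hsimple : ∀ e f, col e = col f → ends e = ends f → e = f)
    (hloop : ∀ e, ¬(ends e).IsDiag) (hsize : ∀ a, {e | col e = a}.ncard ≤ r)
    (hlarge : 2 * k + 2 < (vertexSet ends S).ncard) :
    (chords ends S).ncard ≤ 6 * k * (r - 1) := by
  classical
  set W := vertexSet ends S
  set B := W.toFinset.filter (3 ≤ degree ends S ·)
  have hsum : ∑ v ∈ W.toFinset, degree ends S v = 2 * (#W.toFinset + k) := by
    rw [sum_subset (subset_univ _) fun v _ hv => degree_eq_zero (Set.mem_toFinset.not.1 hv),
      sum_degree_eq_two_mul_ncard hloop, hcard, Set.ncard_eq_toFinset_card']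
  have hB : ∑ v ∈ B, degree ends S v ≤ 6 * k := sum_filter_three_le_le_six_mul _ _
    (fun v hv => hW.two_le_degree hS rfl hcard.ge (Set.mem_toFinset.1 hv)) hsum
  have hlow : 2 < #{v ∈ W.toFinset | ¬3 ≤ degree ends S v} := by
    have h3 : 3 * #B ≤ ∑ v ∈ B, degree ends S v := by
      simpa [mul_comm] using card_nsmul_le_sum B _ 3 fun v hv => (mem_filter.1 hv).2
    have : #B + #{v ∈ W.toFinset | ¬3 ≤ degree ends S v} = W.ncard := by
      rw [Set.ncard_eq_toFinset_card']
      exact card_filter_add_card_filter_not _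
    omega
  have hmate : ∀ e ∈ chords ends S,
      ∃ f ∈ {f ∈ S | ∃ v ∈ B, v ∈ ends f}, f ≠ e ∧ col f = col e := by
    rintro e ⟨he, heW⟩
    obtain ⟨v, hv, hve⟩ := exists_mem_notMem_of_card_lt_card
      ((Sym2.card_toFinset_of_not_isDiag _ (hloop e)).trans_lt hlow)
    obtain ⟨hvW, hv3⟩ := mem_filter.1 hv
    obtain ⟨f, hf, hcol⟩ := hW.exists_mem_col_eq hS rfl hcard he heW (Set.mem_toFinset.1 hvW)
      (mt Sym2.mem_toFinset.2 hve) (by omega)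
    obtain ⟨u, hu, hu3⟩ := hW.exists_three_le_degree hS rfl hcard he heW hsimple hloop hf hcol
    exact ⟨f, ⟨hf, u, mem_filter.2 ⟨Set.mem_toFinset.2 ⟨f, hf, hu⟩, hu3⟩, hu⟩,
      fun h => he (h ▸ hf), hcol⟩
  calc (chords ends S).ncard ≤ {f ∈ S | ∃ v ∈ B, v ∈ ends f}.ncard * (r - 1) :=
        ncard_le_ncard_mul_of_forall_exists_col_eq hsize hmate
    _ ≤ 6 * k * (r - 1) := Nat.mul_le_mul_right _ ((ncard_incident_le_sum_degree S B).trans hB)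

end IsExcessMinimal

end RainbowExcess

theorem minimal_rainbow_few_chords_general {V E C : Type} [Fintype V] [Fintype E]
    (r k : ℕ)
    (ends : E → Sym2 V) (hloop : ∀ e, ¬ (ends e).IsDiag)
    (col : E → C)
    (hsimple : ∀ e f, col e = col f → ends e = ends f → e = f)
    (hsize : ∀ a : C, {e : E | col e = a}.ncard ≤ r)
    (S : Set E) (hrainbow : Set.InjOn col S)
    (hexc : S.ncard = {v : V | ∃ e ∈ S, v ∈ ends e}.ncard + k)
    (hmin : ∀ S' : Set E, Set.InjOn col S' →
      S'.ncard = {v : V | ∃ e ∈ S', v ∈ ends e}.ncard + k →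
      ¬ ({v : V | ∃ e ∈ S', v ∈ ends e} ⊂ {v : V | ∃ e ∈ S, v ∈ ends e})) :
    (∃ e f, ends e = ends f ∧ col e ≠ col f) ∨
      {e : E | e ∉ S ∧ ∀ v ∈ ends e, v ∈ {w : V | ∃ e' ∈ S, w ∈ ends e'}}.ncard ≤
        max ((2 * k + 2).choose 2) (6 * k * (r - 1)) := by
  by_cases hpar : ∃ e f, ends e = ends f ∧ col e ≠ col f
  · exact Or.inl hpar
  push Not at hpar
  right
  have hW : RainbowExcess.IsExcessMinimal ends col k (RainbowExcess.vertexSet ends S) := hmin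
  rcases le_or_gt (RainbowExcess.vertexSet ends S).ncard (2 * k + 2) with hsmall | hlarge
  · have hinj : Function.Injective ends := fun e f h => hsimple e f (hpar e f h) h
    exact le_max_of_le_left ((RainbowExcess.ncard_le_choose_two hloop hinj.injOn
      fun e he => he.2).trans (Nat.choose_le_choose 2 hsmall))
  · exact le_max_of_le_right (hW.ncard_chords_le hrainbow hexc hsimple hloop hsize hlarge)

/-- Let H be a simple edge-coloured (multi)graph whose colour classes have size
at most r, and let R (edge set S) be an excess-k rainbow subgraph whose vertex
set is minimal under inclusion among excess-k rainbow subgraphs. Then either H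
has a rainbow 2-cycle (two parallel edges of distinct colours), or the number
of chords of R in H is at most max{C(2k+2,2), 6k(r-1)}. -/
theorem minimal_rainbow_few_chords {V E C : Type} [Fintype V] [Fintype E]
    (r k : ℕ) (hk : 1 ≤ k) (hr : 1 ≤ r)
    (ends : E → Sym2 V) (hloop : ∀ e, ¬ (ends e).IsDiag)
    (col : E → C)
    (hsimple : ∀ e f, col e = col f → ends e = ends f → e = f)
    (hsize : ∀ a : C, {e : E | col e = a}.ncard ≤ r)
    (S : Set E) (hrainbow : Set.InjOn col S)
    (hexc : S.ncard = {v : V | ∃ e ∈ S, v ∈ ends e}.ncard + k)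
    (hmin : ∀ S' : Set E, Set.InjOn col S' →
      S'.ncard = {v : V | ∃ e ∈ S', v ∈ ends e}.ncard + k →
      ¬ ({v : V | ∃ e ∈ S', v ∈ ends e} ⊂ {v : V | ∃ e ∈ S, v ∈ ends e})) :
    (∃ e f, ends e = ends f ∧ col e ≠ col f) ∨
      {e : E | e ∉ S ∧ ∀ v ∈ ends e, v ∈ {w : V | ∃ e' ∈ S, w ∈ ends e'}}.ncard ≤
        max ((2 * k + 2).choose 2) (6 * k * (r - 1)) :=
  minimal_rainbow_few_chords_general r k ends hloop col hsimple hsize S hrainbow hexc hmin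
end

section
/- Let G be a simple edge-coloured graph with n vertices and n colours where each colour class has size exactly 3, and suppose every vertex of G is the centre of some colour class that is a 3-edge star. Assume (Hamidoune's theorem) that every simple n-vertex digraph with minimum outdegree at least 3 contains a directed cycle of length at most ceil(n/3). Then G contains a rainbow cycle of length at most ceil(n/3). -/
/-- Let G be a simple edge-coloured graph with n vertices, n colours, each
colour class of size exactly 3, in which every vertex is the centre of some
3-edge star colour class. Assuming Hamidoune's theorem (every simple digraph on
these n vertices with minimum outdegree at least 3 has a directed cycle of
length at most ⌈n/3⌉), G contains a rainbow cycle of length at most ⌈n/3⌉. -/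
theorem all_star_case {V E : Type} [Fintype V] [Fintype E] (n : ℕ)
    (hV : Fintype.card V = n)
    (ends : E → Sym2 V) (hloop : ∀ e, ¬ (ends e).IsDiag)
    (col : E → Fin n)
    (hsimple : ∀ e f, col e = col f → ends e = ends f → e = f)
    (hsize : ∀ i : Fin n, {e : E | col e = i}.ncard = 3)
    (hstar : ∀ v : V, ∃ i : Fin n, ∀ e, col e = i → v ∈ ends e)
    (hamidoune : ∀ D : V → V → Prop, (∀ v, ¬ D v v) →
      (∀ v, 3 ≤ {w | D v w}.ncard) →
      ∃ (m : ℕ) (f : ZMod m → V), 0 < m ∧ Function.Injective f ∧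
        (∀ i, D (f i) (f (i + 1))) ∧ (m : ℤ) ≤ ⌈(n : ℚ) / 3⌉) :
    ∃ (m : ℕ) (f : ZMod m → V) (g : ZMod m → E), 0 < m ∧
      Function.Injective f ∧
      (∀ i, ends (g i) = s(f i, f (i + 1))) ∧
      Function.Injective (col ∘ g) ∧
      (m : ℤ) ≤ ⌈(n : ℚ) / 3⌉ := by
  classical
  set iv : V → Fin n := fun v => (hstar v).choose with hiv
  have hiv_spec : ∀ v e, col e = iv v → v ∈ ends e := fun v => (hstar v).choose_spec
  set D : V → V → Prop := fun v w => w ≠ v ∧ ∃ e, col e = iv v ∧ ends e = s(v, w)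
    with hD_def
  have hDirr : ∀ v, ¬ D v v := fun v h => h.1 rfl
  have hdeg : ∀ v, 3 ≤ {w | D v w}.ncard := by
    intro v
    set oth : E → V := fun e => if h : v ∈ ends e then Sym2.Mem.other h else v with hothdef
    have hoth : ∀ e, col e = iv v → ends e = s(v, oth e) ∧ oth e ≠ v := by
      intro e he
      have hv := hiv_spec v e he
      have h1 : oth e = Sym2.Mem.other hv := dif_pos hv
      have h2 : ends e = s(v, oth e) := by rw [h1, Sym2.other_spec hv]
      refine ⟨h2, fun hne => hloop e ?_⟩
      rw [h2, hne]
      exact Sym2.mk_isDiag_iff.mpr rfl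
    have hsub : oth '' {e | col e = iv v} ⊆ {w | D v w} := by
      rintro w ⟨e, he, rfl⟩
      exact ⟨(hoth e he).2, e, he, (hoth e he).1⟩
    have hinj : Set.InjOn oth {e | col e = iv v} := by
      intro e he f hf hef
      exact hsimple e f (he.trans hf.symm)
        (by rw [(hoth e he).1, hef, ← (hoth f hf).1])
    calc (3 : ℕ) = ({e | col e = iv v}).ncard := (hsize (iv v)).symm
      _ = (oth '' {e | col e = iv v}).ncard := (Set.ncard_image_of_injOn hinj).symm
      _ ≤ {w | D v w}.ncard := Set.ncard_le_ncard hsub (Set.toFinite _)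
  obtain ⟨m, f, hm, hfinj, hD, hle⟩ := hamidoune D hDirr hdeg
  choose g hg1 hg2 using fun i => (hD i).2
  refine ⟨m, f, g, hm, hfinj, hg2, ?_, hle⟩
  intro i j hij
  simp only [Function.comp_apply] at hij
  have hcol : iv (f i) = iv (f j) := by rw [← hg1 i, ← hg1 j, hij]
  have hfij : f i = f j := by
    by_contra hne
    have hall : ∀ e, col e = iv (f i) → ends e = s(f i, f j) := by
      intro e he
      have h1 : f i ∈ ends e := hiv_spec (f i) e he
      have h2 : f j ∈ ends e := hiv_spec (f j) e (by rwa [← hcol])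
      exact ((Sym2.mem_and_mem_iff hne).mp ⟨h1, h2⟩)
    have h3 : 1 < ({e : E | col e = iv (f i)}).ncard := by
      rw [hsize (iv (f i))]; norm_num
    obtain ⟨a, b, ha, hb, hab⟩ := (Set.one_lt_ncard_iff (Set.toFinite _)).mp h3
    exact hab (hsimple a b (ha.trans hb.symm)
      ((hall a ha).trans (hall b hb).symm))
  exact hfinj hfij
end
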